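/- Let G be a graph on n vertices and let k, ℓ be integers with k ≥ χ_g(G)+1 > ℓ. Then for any proper k-coloring α of G and any greedy (grundy) coloring β of G that uses exactly ℓ colors, the distance between α and β in the k-recoloring graph R_k(G) is at most (2ℓ−1)·n. -/

import Mathlib

open SimpleGraph

/-- A proper `k`-coloring of a graph. -/
def Proper {V : Type} (G : SimpleGraph V) {k : ℕ} (c : V → Fin k) : Prop :=
  ∀ ⦃x y⦄, G.Adj x y → c x ≠ c y

/-- The `k`-recoloring graph of `G`: vertices are the proper `k`-colorings of `G`,
two colorings being adjacent when they differ on exactly one vertex. -/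
def recolorGraph {V : Type} (G : SimpleGraph V) (k : ℕ) :
    SimpleGraph {c : V → Fin k // Proper G c} where
  Adj c d := ∃! v, c.1 v ≠ d.1 v
  symm := by
    constructor
    rintro c d ⟨v, hv, hu⟩
    exact ⟨v, hv.symm, fun w hw => hu w hw.symm⟩
  loopless := by
    constructor
    rintro c ⟨v, hv, -⟩
    exact hv rfl

/-- `c` is a greedy (grundy) coloring of `G` relative to some vertex order:
equivalently, it is proper and every vertex sees every smaller color in its
neighborhood. -/
def IsGrundy {V : Type} (G : SimpleGraph V) (c : V → ℕ) : Prop :=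
  (∀ ⦃x y⦄, G.Adj x y → c x ≠ c y) ∧ ∀ v, ∀ j < c v, ∃ u, G.Adj v u ∧ c u = j

/-- The grundy number of `G`: the largest number of colors of a greedy coloring. -/
noncomputable def grundyNum {V : Type} [Fintype V] (G : SimpleGraph V) : ℕ :=
  sSup {ℓ | ∃ c : V → ℕ, IsGrundy G c ∧ (Finset.univ.image c).card = ℓ}

/-- A tree decomposition of the graph `G`, with nodes indexed by `ι`. -/
structure TreeDecomp {V : Type} (G : SimpleGraph V) (ι : Type) where
  T : SimpleGraph ι
  isTree : T.IsTree
  bag : ι → Finset V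
  mem_bag : ∀ x : V, ∃ u, x ∈ bag u
  edge_bag : ∀ ⦃x y⦄, G.Adj x y → ∃ u, x ∈ bag u ∧ y ∈ bag u
  support_connected : ∀ x : V, (T.induce {u | x ∈ bag u}).Connected

/-- The treewidth of a finite graph: the least `w` such that some tree decomposition
has all bags of size at most `w + 1`. -/
noncomputable def treewidth {V : Type} [Fintype V] (G : SimpleGraph V) : ℕ :=
  sInf {w | ∃ (m : ℕ) (td : TreeDecomp G (Fin m)), ∀ u, (td.bag u).card ≤ w + 1}

/-- An `ℓ`-complete tree decomposition: every bag has size `ℓ+1` and adjacent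
bags intersect on `ℓ` vertices. -/
def TreeDecomp.IsComplete {V ι : Type} [DecidableEq V] {G : SimpleGraph V}
    (td : TreeDecomp G ι) (ℓ : ℕ) : Prop :=
  (∀ u, (td.bag u).card = ℓ + 1) ∧
  ∀ ⦃u v⦄, td.T.Adj u v → (td.bag u ∩ td.bag v).card = ℓ

/-- `x` and `y` are `T`-parents: for some adjacent nodes `u, v`,
`x = B_u ∖ B_v` and `y = B_v ∖ B_u`. -/
def TreeDecomp.Parent {V ι : Type} [DecidableEq V] {G : SimpleGraph V}
    (td : TreeDecomp G ι) (x y : V) : Prop :=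
  ∃ u v, td.T.Adj u v ∧ td.bag u \ td.bag v = {x} ∧ td.bag v \ td.bag u = {y}

/-- A coloring is `X`-coherent (relative to a tree decomposition) if parents in `X`
get the same color and every vertex of `X` is the unique vertex of its color in
every bag containing it. -/
def TreeDecomp.Coherent {V ι : Type} [DecidableEq V] {G : SimpleGraph V}
    (td : TreeDecomp G ι) (X : Set V) {k : ℕ} (c : V → Fin k) : Prop :=
  (∀ ⦃x y⦄, x ∈ X → y ∈ X → td.Parent x y → c x = c y) ∧
  ∀ u, ∀ x ∈ X, x ∈ td.bag u → ∀ y ∈ td.bag u, c y = c x → y = x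

/-- The subtree rooted at `v` when `T` is rooted at `u`: the nodes all of whose
walks to the root `u` pass through `v`. -/
def subtreeAt {ι : Type} (T : SimpleGraph ι) (u v : ι) : Set ι :=
  {p | ∀ w : T.Walk p u, v ∈ w.support}

/-- `G` contains an induced path on four vertices. -/
def HasInducedP4 {V : Type} (G : SimpleGraph V) : Prop :=
  ∃ a b c d : V, a ≠ b ∧ a ≠ c ∧ a ≠ d ∧ b ≠ c ∧ b ≠ d ∧ c ≠ d ∧
    G.Adj a b ∧ G.Adj b c ∧ G.Adj c d ∧ ¬G.Adj a c ∧ ¬G.Adj a d ∧ ¬G.Adj b d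

/-- `G` contains an induced path on five vertices. -/
def HasInducedP5 {V : Type} (G : SimpleGraph V) : Prop :=
  ∃ a b c d e : V, a ≠ b ∧ a ≠ c ∧ a ≠ d ∧ a ≠ e ∧ b ≠ c ∧ b ≠ d ∧ b ≠ e ∧
    c ≠ d ∧ c ≠ e ∧ d ≠ e ∧
    G.Adj a b ∧ G.Adj b c ∧ G.Adj c d ∧ G.Adj d e ∧
    ¬G.Adj a c ∧ ¬G.Adj a d ∧ ¬G.Adj a e ∧ ¬G.Adj b d ∧ ¬G.Adj b e ∧ ¬G.Adj c e

/-- A walk is an induced path if it is a path and the only adjacencies among its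
vertices are its own edges. -/
def IsInducedPathW {V : Type} (G : SimpleGraph V) {x y : V} (p : G.Walk x y) : Prop :=
  p.IsPath ∧ ∀ ⦃u v⦄, u ∈ p.support → v ∈ p.support → G.Adj u v → s(u, v) ∈ p.edges

/-- A graph is distance-hereditary if any two induced paths between the same pair of
vertices have the same length. -/
def IsDistanceHereditary {V : Type} (G : SimpleGraph V) : Prop :=
  ∀ (x y : V) (p q : G.Walk x y),
    IsInducedPathW G p → IsInducedPathW G q → p.length = q.length

/-- `X` is a module of `G`: every outside vertex is adjacent to all of `X` or none of it. -/
def IsModule {V : Type} (G : SimpleGraph V) (X : Set V) : Prop :=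
  ∀ y ∉ X, (∀ x ∈ X, G.Adj y x) ∨ ∀ x ∈ X, ¬G.Adj y x

/-- `X` is a strong module of `G`: a module of size at least two which overlaps
no other module. -/
def IsStrongModule {V : Type} (G : SimpleGraph V) (X : Set V) : Prop :=
  IsModule G X ∧ 2 ≤ X.ncard ∧
    ∀ M : Set V, IsModule G M → Disjoint M X ∨ M ⊆ X ∨ X ⊆ M

/-- The setoid identifying all elements of `C`. -/
def mergedSetoid {V : Type} (C : Set V) : Setoid V where
  r x y := x = y ∨ (x ∈ C ∧ y ∈ C)
  iseqv := by
    refine ⟨fun x => Or.inl rfl, ?_, ?_⟩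
    · rintro x y (rfl | ⟨h1, h2⟩)
      · exact Or.inl rfl
      · exact Or.inr ⟨h2, h1⟩
    · rintro x y z (rfl | ⟨h1, h2⟩) (rfl | ⟨h3, h4⟩)
      · exact Or.inl rfl
      · exact Or.inr ⟨h3, h4⟩
      · exact Or.inr ⟨h1, h2⟩
      · exact Or.inr ⟨h1, h4⟩

/-- The merged graph on an independent set `C`: all vertices of `C` are identified
into a single vertex. -/
def mergedGraph {V : Type} (G : SimpleGraph V) (C : Set V)
    (hC : ∀ x ∈ C, ∀ y ∈ C, ¬G.Adj x y) :
    SimpleGraph (Quotient (mergedSetoid C)) where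
  Adj a b := ∃ x y, G.Adj x y ∧ Quotient.mk (mergedSetoid C) x = a ∧
    Quotient.mk (mergedSetoid C) y = b
  symm := by
    constructor
    rintro a b ⟨x, y, hxy, rfl, rfl⟩
    exact ⟨y, x, hxy.symm, rfl, rfl⟩
  loopless := by
    constructor
    rintro a ⟨x, y, hxy, rfl, h⟩
    rcases Quotient.exact h with rfl | ⟨h1, h2⟩
    · exact G.loopless.irrefl _ hxy
    · exact hC x h2 y h1 hxy

/-- `α` can be transformed into `β` by single-vertex recolorings through proper
`k`-colorings of `G`, recoloring each vertex `v` at most `bound v` times. -/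
def RecolorSeqLe {V : Type} (G : SimpleGraph V) {k : ℕ} (α β : V → Fin k)
    (bound : V → ℕ) : Prop :=
  ∃ (m : ℕ) (c : ℕ → V → Fin k),
    c 0 = α ∧ c m = β ∧ (∀ i ≤ m, Proper G (c i)) ∧
    (∀ i < m, ∃! v, c i v ≠ c (i + 1) v) ∧
    ∀ v, ((Finset.range m).filter fun i => c i v ≠ c (i + 1) v).card ≤ bound v

/-- A modular coloring: for every strong module `M` which is the disjoint union of
`p ≥ 2` strong modules `Ms 0, …, Ms (p-1)`, the coloring uses exactly `χ(H[M])`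
colors on `M`, and each `Ms i` receives exactly the first `χ(H[Ms i])` of those colors. -/
def ModularColoring {W : Type} (H : SimpleGraph W) {k : ℕ} (c : W → Fin k) : Prop :=
  ∀ (M : Set W) (p : ℕ) (Ms : Fin p → Set W), 2 ≤ p →
    IsStrongModule H M → (∀ i, IsStrongModule H (Ms i)) →
    (Pairwise fun i j => Disjoint (Ms i) (Ms j)) →
    M = ⋃ i, Ms i →
    (∀ i j, i ≠ j → ∀ x ∈ Ms i, ∀ y ∈ Ms j, ¬H.Adj x y) →
    ((c '' M).ncard : ℕ∞) = (H.induce M).chromaticNumber ∧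
    ∀ i, ((c '' Ms i).ncard : ℕ∞) = (H.induce (Ms i)).chromaticNumber ∧
      ∀ a ∈ c '' Ms i, ∀ b ∈ c '' M, b ≤ a → b ∈ c '' Ms i

/-- A frozen `k`-coloring: a proper coloring in which every vertex sees every other
color in its neighborhood. -/
def Frozen {V : Type} (G : SimpleGraph V) {k : ℕ} (c : V → Fin k) : Prop :=
  Proper G c ∧ ∀ x, ∀ b : Fin k, b ≠ c x → ∃ y, G.Adj x y ∧ c y = b

/-- A grundy coloring (with values in `Fin k`) is in particular proper. -/
theorem IsGrundy.proper {V : Type} {G : SimpleGraph V} {k : ℕ} {β : V → Fin k}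
    (hβ : IsGrundy G (fun v => (β v : ℕ))) : Proper G β :=
  fun _ _ hxy h => hβ.1 hxy (congrArg Fin.val h)

/-!
Recolor towards `β` one color class at a time: before phase `j`, every vertex `v` with `β v < j`
already has its final color. Phase `j` sweeps the remaining vertices in increasing order of their
current color, giving each the least color `≥ j` absent from its already swept neighbours; the
result is a greedy coloring, so it does not use color `k - 1 ≥ χ_g(G)`. The vertices of color `j`
that must lose it form an independent set and move to `k - 1`; then the class `β⁻¹(j)`, also
independent, is recolored to `j`. A phase costs at most `2n` recolorings and the last one, where
only this final step is needed, at most `n`: `(2ℓ - 1)n` in total.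
-/

open Finset Function

section Grundy

variable {V : Type} [Fintype V] {G : SimpleGraph V}

theorem IsGrundy.lt_card_image {c : V → ℕ} (hc : IsGrundy G c) (v : V) :
    c v < (univ.image c).card := by
  have hsub : range (c v + 1) ⊆ univ.image c := by
    intro i hi
    rcases (Nat.lt_succ_iff.mp (mem_range.mp hi)).lt_or_eq with hlt | rfl
    · obtain ⟨u, -, hu⟩ := hc.2 v i hlt
      exact mem_image.mpr ⟨u, mem_univ u, hu⟩
    · exact mem_image_of_mem c (mem_univ v)
  simpa using card_le_card hsub

theorem IsGrundy.card_image_le_grundyNum {c : V → ℕ} (hc : IsGrundy G c) :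
    (univ.image c).card ≤ grundyNum G :=
  le_csSup ⟨Fintype.card V, by rintro _ ⟨c', -, rfl⟩; exact card_image_le.trans (by simp)⟩
    ⟨c, hc, rfl⟩

end Grundy

section Recoloring

variable {V : Type} {G : SimpleGraph V} {k : ℕ}

theorem Proper.update [DecidableEq V] {c : V → Fin k} (hc : Proper G c) {v : V} {b : Fin k}
    (hb : ∀ u, G.Adj v u → c u ≠ b) : Proper G (update c v b) := by
  intro x y hxy
  rcases eq_or_ne x v with rfl | hx
  · rw [update_self, update_of_ne (G.ne_of_adj hxy).symm]
    exact (hb y hxy).symm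
  rcases eq_or_ne y v with rfl | hy
  · rw [update_self, update_of_ne hx]
    exact hb x hxy.symm
  · rw [update_of_ne hx, update_of_ne hy]
    exact hc hxy

theorem Proper.piecewise [DecidableEq V] {c τ : V → Fin k} (hc : Proper G c) {S : Finset V}
    (hS : ∀ x ∈ S, ∀ y ∈ S, ¬G.Adj x y) (hτ : ∀ x ∈ S, ∀ y, G.Adj x y → c y ≠ τ x) :
    Proper G (S.piecewise τ c) := by
  intro x y hxy
  by_cases hx : x ∈ S <;> by_cases hy : y ∈ S <;>
    simp only [piecewise_eq_of_mem, piecewise_eq_of_notMem, hx, hy, not_false_eq_true]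
  · exact absurd hxy (hS x hx y hy)
  · exact (hτ x hx y hxy).symm
  · exact hτ y hy x hxy.symm
  · exact hc hxy

theorem recolorGraph_edist_le_one {c c' : V → Fin k} (hc : Proper G c) (hc' : Proper G c')
    (v : V) (h : ∀ w ≠ v, c w = c' w) : (recolorGraph G k).edist ⟨c, hc⟩ ⟨c', hc'⟩ ≤ 1 := by
  rw [edist_le_one_iff_adj_or_eq]
  by_cases hv : c v = c' v
  · exact Or.inr (Subtype.ext (funext fun w => (eq_or_ne w v).elim (· ▸ hv) (h w)))
  · exact Or.inl ⟨v, hv, fun w hw => by_contra fun hwv => hw (h w hwv)⟩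

theorem recolorGraph_edist_piecewise_le_card [DecidableEq V] {c τ : V → Fin k}
    (hc : Proper G c) {S : Finset V} (hS : ∀ x ∈ S, ∀ y ∈ S, ¬G.Adj x y)
    (hτ : ∀ x ∈ S, ∀ y, G.Adj x y → c y ≠ τ x) :
    (recolorGraph G k).edist ⟨c, hc⟩ ⟨S.piecewise τ c, hc.piecewise hS hτ⟩ ≤ S.card := by
  induction S using Finset.induction_on with
  | empty => simp
  | insert a S ha ih =>
    have hS' : ∀ x ∈ S, ∀ y ∈ S, ¬G.Adj x y := fun x hx y hy =>
      hS x (mem_insert_of_mem hx) y (mem_insert_of_mem hy)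
    have hτ' : ∀ x ∈ S, ∀ y, G.Adj x y → c y ≠ τ x := fun x hx => hτ x (mem_insert_of_mem hx)
    have hstep := recolorGraph_edist_le_one (hc.piecewise hS' hτ') (hc.piecewise hS hτ) a
      fun w hw => (piecewise_insert_of_ne _ _ _ hw).symm
    calc _ ≤ (S.card : ℕ∞) + 1 :=
          SimpleGraph.edist_triangle.trans (add_le_add (ih hS' hτ') hstep)
      _ = (insert a S).card := by rw [card_insert_of_notMem ha]; push_cast; rfl

theorem SimpleGraph.exists_edist_le_card {α ι : Type*} [DecidableEq ι] (H : SimpleGraph α)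
    (P : Finset ι → α → Prop)
    (step : ∀ U x, P U x → U.Nonempty → ∃ i ∈ U, ∃ y, P (U.erase i) y ∧ H.edist x y ≤ 1)
    (U : Finset ι) (x : α) (hx : P U x) : ∃ y, P ∅ y ∧ H.edist x y ≤ U.card := by
  induction U using Finset.strongInduction generalizing x with
  | H U ih =>
    rcases U.eq_empty_or_nonempty with rfl | hU
    · exact ⟨x, hx, by simp⟩
    obtain ⟨i, hi, y, hy, hxy⟩ := step U x hx hU
    obtain ⟨z, hz, hyz⟩ := ih _ (erase_ssubset hi) y hy
    refine ⟨z, hz, (H.edist_triangle (v := y)).trans ?_⟩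
    calc _ ≤ 1 + ((U.erase i).card : ℕ∞) := add_le_add hxy hyz
      _ = U.card := by rw [← card_erase_add_one hi]; push_cast; ring

end Recoloring

theorem exists_min_ge_not {P : ℕ → Prop} {j c : ℕ} (hjc : j ≤ c) (hc : ¬P c) :
    ∃ b, j ≤ b ∧ b ≤ c ∧ ¬P b ∧ ∀ i, j ≤ i → i < b → P i := by
  classical
  have h : ∃ b, j ≤ b ∧ ¬P b := ⟨c, hjc, hc⟩
  exact ⟨Nat.find h, (Nat.find_spec h).1, Nat.find_min' h ⟨hjc, hc⟩, (Nat.find_spec h).2,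
    fun i hji hi => by_contra fun hPi => Nat.find_min h hi ⟨hji, hPi⟩⟩

section Phase

variable {V : Type} {G : SimpleGraph V} {k : ℕ} {β : V → Fin k} {j : ℕ}

def AgreesBelow (β : V → Fin k) (j : ℕ) (γ : V → Fin k) : Prop :=
  ∀ v, (β v : ℕ) < j → γ v = β v

theorem AgreesBelow.le_of_le (hβ : IsGrundy G fun v => (β v : ℕ)) {γ : V → Fin k}
    (hγ : Proper G γ) (h : AgreesBelow β j γ) {v : V} (hv : j ≤ β v) : j ≤ γ v := by
  by_contra hlt
  obtain ⟨u, hvu, hu : (β u : ℕ) = γ v⟩ := hβ.2 v (γ v) (show (γ v : ℕ) < β v by omega)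
  exact hγ hvu ((h u (by omega)).trans (Fin.ext hu)).symm

theorem AgreesBelow.isGrundy (hβ : IsGrundy G fun v => (β v : ℕ)) {γ : V → Fin k}
    (hγ : Proper G γ) (h : AgreesBelow β j γ)
    (hγj : ∀ v, j ≤ β v → ∀ c, j ≤ c → c < γ v → ∃ u, G.Adj v u ∧ (γ u : ℕ) = c) :
    IsGrundy G fun v => (γ v : ℕ) := by
  refine ⟨fun x y hxy hxy' => hγ hxy (Fin.ext hxy'), fun v c (hc : c < γ v) => ?_⟩
  show ∃ u, G.Adj v u ∧ (γ u : ℕ) = c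
  by_cases hcj : c < j
  · have hcv : c < β v := by
      by_cases hv : (β v : ℕ) < j
      · rwa [← h v hv]
      · omega
    obtain ⟨u, hvu, hu : (β u : ℕ) = c⟩ := hβ.2 v c hcv
    exact ⟨u, hvu, by rw [h u (by omega), hu]⟩
  · refine hγj v ?_ c (by omega) hc
    by_contra hv
    have := h v (by omega)
    omega

/-- The state of the sweep of phase `j`, where `U` holds the vertices not yet swept. -/
def SweptExcept (G : SimpleGraph V) (β : V → Fin k) (j : ℕ) (U : Finset V) (γ : V → Fin k) :
    Prop :=
  AgreesBelow β j γ ∧ (∀ v ∈ U, j ≤ β v) ∧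
    ∀ w, j ≤ β w → w ∉ U → ∀ c, j ≤ c → c < γ w →
      ∃ u, G.Adj w u ∧ j ≤ β u ∧ u ∉ U ∧ (γ u : ℕ) = c

theorem SweptExcept.exists_color (hβ : IsGrundy G fun v => (β v : ℕ)) {U : Finset V}
    {γ : V → Fin k} (hγ : Proper G γ) (h : SweptExcept G β j U γ) {v : V} (hvU : v ∈ U)
    (hmin : ∀ u ∈ U, (γ v : ℕ) ≤ γ u) :
    ∃ b : Fin k, (∀ u, G.Adj v u → γ u ≠ b) ∧
      ∀ c, j ≤ c → c < b → ∃ u, G.Adj v u ∧ j ≤ β u ∧ u ∉ U ∧ (γ u : ℕ) = c := by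
  obtain ⟨hagree, hUj, -⟩ := h
  let P c := ∃ u, G.Adj v u ∧ j ≤ β u ∧ u ∉ U ∧ (γ u : ℕ) = c
  obtain ⟨b, hjb, hbv, hPb, hbelow⟩ := exists_min_ge_not (P := P)
    (hagree.le_of_le hβ hγ (hUj v hvU)) fun ⟨u, hvu, _, _, hu⟩ => hγ hvu (Fin.ext hu.symm)
  refine ⟨⟨b, hbv.trans_lt (γ v).isLt⟩, fun u hvu hub => ?_, hbelow⟩
  -- the unswept neighbours have colors above `γ v ≥ b`, the frozen ones below `j ≤ b`
  replace hub : (γ u : ℕ) = b := congrArg Fin.val hub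
  have hvu' : (γ v : ℕ) ≠ γ u := fun h => hγ hvu (Fin.ext h)
  by_cases huU : u ∈ U
  · have := hmin u huU
    omega
  by_cases hju : j ≤ β u
  · exact hPb ⟨u, hvu, hju, huU, hub⟩
  · have := hagree u (by omega)
    omega

theorem SweptExcept.exists_erase [DecidableEq V] (hβ : IsGrundy G fun v => (β v : ℕ))
    {U : Finset V} {γ : {c : V → Fin k // Proper G c}} (h : SweptExcept G β j U γ.1)
    (hU : U.Nonempty) :
    ∃ v ∈ U, ∃ γ' : {c : V → Fin k // Proper G c},
      SweptExcept G β j (U.erase v) γ'.1 ∧ (recolorGraph G k).edist γ γ' ≤ 1 := by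
  obtain ⟨γ, hγ⟩ := γ
  obtain ⟨v, hvU, hmin⟩ := U.exists_min_image (fun u => (γ u : ℕ)) hU
  obtain ⟨b, hfree, hbelow⟩ := h.exists_color hβ hγ hvU hmin
  obtain ⟨hagree, hUj, hswept⟩ : SweptExcept G β j U γ := h
  have hupd : ∀ u ∉ U, update γ v b u = γ u := fun u hu =>
    update_of_ne (by rintro rfl; exact hu hvU) _ _
  have hnotMem : ∀ u ∉ U, u ∉ U.erase v := fun u hu h => hu (mem_of_mem_erase h)
  refine ⟨v, hvU, ⟨_, hγ.update hfree⟩, ⟨?_, fun w hw => hUj w (mem_of_mem_erase hw), ?_⟩,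
    recolorGraph_edist_le_one _ _ v fun w hw => (update_of_ne hw _ _).symm⟩ <;> dsimp only
  · intro w hw
    rw [update_of_ne (by rintro rfl; have := hUj w hvU; omega)]
    exact hagree w hw
  · intro w hjw hwU c hjc hc
    rcases eq_or_ne w v with rfl | hwv
    · rw [update_self] at hc
      obtain ⟨u, hwu, hju, huU, hu⟩ := hbelow c hjc hc
      exact ⟨u, hwu, hju, hnotMem u huU, by rw [hupd u huU, hu]⟩
    · rw [update_of_ne hwv] at hc
      obtain ⟨u, hwu, hju, huU, hu⟩ :=
        hswept w hjw (fun h => hwU (mem_erase.mpr ⟨hwv, h⟩)) c hjc hc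
      exact ⟨u, hwu, hju, hnotMem u huU, by rw [hupd u huU, hu]⟩

variable [Fintype V]

theorem exists_isGrundy_of_agreesBelow (hβ : IsGrundy G fun v => (β v : ℕ)) {γ : V → Fin k}
    (hγ : Proper G γ) (h : AgreesBelow β j γ) :
    ∃ g : {c : V → Fin k // Proper G c}, AgreesBelow β j g.1 ∧
      IsGrundy G (fun v => (g.1 v : ℕ)) ∧ (recolorGraph G k).edist ⟨γ, hγ⟩ g ≤ Fintype.card V := by
  classical
  obtain ⟨g, ⟨hgj, -, hgsw⟩, hdist⟩ := (recolorGraph G k).exists_edist_le_card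
    (fun U g => SweptExcept G β j U g.1) (fun _ _ hg hU => hg.exists_erase hβ hU)
    (univ.filter fun v => j ≤ β v) ⟨γ, hγ⟩
    ⟨h, fun v hv => (mem_filter.mp hv).2,
      fun w hw hwU => absurd (mem_filter.mpr ⟨mem_univ w, hw⟩) hwU⟩
  refine ⟨g, hgj, hgj.isGrundy hβ g.2 fun v hv c hjc hc => ?_,
    hdist.trans (by exact_mod_cast card_le_univ _)⟩
  obtain ⟨u, hvu, -, -, hu⟩ := hgsw v hv (notMem_empty v) c hjc hc
  exact ⟨u, hvu, hu⟩

theorem exists_agreesBelow_forall_ne (hk : grundyNum G + 1 ≤ k) (hj : j + 1 < k)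
    {g : V → Fin k} (hg : Proper G g) (hgr : IsGrundy G fun v => (g v : ℕ))
    (h : AgreesBelow β j g) :
    ∃ δ : {c : V → Fin k // Proper G c}, AgreesBelow β j δ.1 ∧
      (∀ v, j < β v → (δ.1 v : ℕ) ≠ j) ∧
      (recolorGraph G k).edist ⟨g, hg⟩ δ ≤ (univ.filter fun v => (β v : ℕ) ≠ j).card := by
  classical
  let top : Fin k := ⟨k - 1, by omega⟩
  let S := univ.filter fun v => (g v : ℕ) = j ∧ β v ≠ g v
  -- `g` is greedy, so its colors stay below `grundyNum G ≤ k - 1`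
  have htop : ∀ v, g v ≠ top := fun v hv => by
    have := hgr.lt_card_image v
    have := hgr.card_image_le_grundyNum
    have : (g v : ℕ) = k - 1 := congrArg Fin.val hv
    omega
  have hS : ∀ x ∈ S, ∀ y ∈ S, ¬G.Adj x y := fun x hx y hy hxy =>
    hg hxy (Fin.ext (by simp only [S, mem_filter] at hx hy; omega))
  have hnotMem : ∀ v, (β v : ℕ) < j → v ∉ S := fun v hv hvS =>
    (mem_filter.mp hvS).2.2 (h v hv).symm
  have hτ : ∀ x ∈ S, ∀ y, G.Adj x y → g y ≠ (fun _ => top) x := fun _ _ y _ => htop y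
  refine ⟨⟨_, hg.piecewise hS hτ⟩, ?_, ?_, (recolorGraph_edist_piecewise_le_card hg hS hτ).trans ?_⟩
  · intro v hv
    dsimp only
    rw [piecewise_eq_of_notMem _ _ _ (hnotMem v hv), h v hv]
  · intro v hv
    dsimp only
    by_cases hvS : v ∈ S
    · rw [piecewise_eq_of_mem _ _ _ hvS]
      simp only [top]
      omega
    · rw [piecewise_eq_of_notMem _ _ _ hvS]
      intro hgv
      refine hvS (mem_filter.mpr ⟨mem_univ v, hgv, fun hβv => ?_⟩)
      rw [hβv] at hv
      omega
  · exact_mod_cast card_le_card fun v hv => by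
      simp only [S, mem_filter] at hv ⊢
      exact ⟨hv.1, fun hβv => hv.2.2 (Fin.ext (hβv.trans hv.2.1.symm))⟩

theorem exists_agreesBelow_succ_of_forall_ne (hβ : Proper G β) {δ : V → Fin k}
    (hδ : Proper G δ) (h : AgreesBelow β j δ) (hne : ∀ v, j < β v → (δ v : ℕ) ≠ j) :
    ∃ ε : {c : V → Fin k // Proper G c}, AgreesBelow β (j + 1) ε.1 ∧
      (recolorGraph G k).edist ⟨δ, hδ⟩ ε ≤ (univ.filter fun v => (β v : ℕ) = j).card := by
  classical
  let T := univ.filter fun v => (β v : ℕ) = j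
  have hT : ∀ x ∈ T, ∀ y ∈ T, ¬G.Adj x y := fun x hx y hy hxy =>
    hβ hxy (Fin.ext (by simp only [T, mem_filter] at hx hy; omega))
  have hτ : ∀ x ∈ T, ∀ y, G.Adj x y → δ y ≠ β x := by
    intro x hx y hxy hyx
    have hx : (β x : ℕ) = j := (mem_filter.mp hx).2
    rcases lt_trichotomy (β y : ℕ) j with hy | hy | hy
    · exact hβ hxy ((h y hy).symm.trans hyx).symm
    · exact hβ hxy (Fin.ext (hx.trans hy.symm))
    · exact hne y hy (by rw [hyx, hx])
  refine ⟨⟨_, hδ.piecewise hT hτ⟩, fun v hv => ?_, recolorGraph_edist_piecewise_le_card hδ hT hτ⟩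
  dsimp only
  by_cases hvT : v ∈ T
  · exact piecewise_eq_of_mem _ _ _ hvT
  · rw [piecewise_eq_of_notMem _ _ _ hvT]
    exact h v (by simp only [T, mem_filter, mem_univ, true_and] at hvT; omega)

theorem exists_agreesBelow_succ (hβ : IsGrundy G fun v => (β v : ℕ))
    (hk : grundyNum G + 1 ≤ k) (hj : j + 1 < k) {γ : V → Fin k} (hγ : Proper G γ)
    (h : AgreesBelow β j γ) :
    ∃ ε : {c : V → Fin k // Proper G c}, AgreesBelow β (j + 1) ε.1 ∧
      (recolorGraph G k).edist ⟨γ, hγ⟩ ε ≤ (2 * Fintype.card V : ℕ) := by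
  obtain ⟨g, hgj, hgr, hγg⟩ := exists_isGrundy_of_agreesBelow hβ hγ h
  obtain ⟨δ, hδj, hδne, hgδ⟩ := exists_agreesBelow_forall_ne hk hj g.2 hgr hgj
  obtain ⟨ε, hεj, hδε⟩ := exists_agreesBelow_succ_of_forall_ne hβ.proper δ.2 hδj hδne
  refine ⟨ε, hεj, ?_⟩
  calc _ ≤ (recolorGraph G k).edist ⟨γ, hγ⟩ g + ((recolorGraph G k).edist g δ +
          (recolorGraph G k).edist δ ε) :=
        SimpleGraph.edist_triangle.trans (add_le_add le_rfl SimpleGraph.edist_triangle)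
    _ ≤ Fintype.card V + ((univ.filter fun v => (β v : ℕ) ≠ j).card +
          (univ.filter fun v => (β v : ℕ) = j).card : ℕ) := by
        push_cast
        gcongr
    _ = (2 * Fintype.card V : ℕ) := by
        rw [add_comm (card _), card_filter_add_card_filter_not, card_univ, two_mul, Nat.cast_add]

theorem exists_agreesBelow_edist_le (hβ : IsGrundy G fun v => (β v : ℕ))
    (hk : grundyNum G + 1 ≤ k) {α : V → Fin k} (hα : Proper G α) :
    ∀ j < k, ∃ γ : {c : V → Fin k // Proper G c}, AgreesBelow β j γ.1 ∧
      (recolorGraph G k).edist ⟨α, hα⟩ γ ≤ (2 * j * Fintype.card V : ℕ)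
  | 0, _ => ⟨⟨α, hα⟩, fun _ hv => absurd hv (Nat.not_lt_zero _), by simp⟩
  | j + 1, hj => by
    obtain ⟨γ, hγj, hαγ⟩ := exists_agreesBelow_edist_le hβ hk hα j (by omega)
    obtain ⟨ε, hεj, hγε⟩ := exists_agreesBelow_succ hβ hk hj γ.2 hγj
    refine ⟨ε, hεj, SimpleGraph.edist_triangle.trans ((add_le_add hαγ hγε).trans ?_)⟩
    exact_mod_cast (show 2 * j * Fintype.card V + 2 * Fintype.card V =
      2 * (j + 1) * Fintype.card V by ring).le

theorem recolorGraph_edist_le_of_isGrundy (hk : grundyNum G + 1 ≤ k) {α β : V → Fin k}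
    (hα : Proper G α) (hβ : IsGrundy G fun v => (β v : ℕ)) :
    (recolorGraph G k).edist ⟨α, hα⟩ ⟨β, hβ.proper⟩ ≤
      ((2 * (univ.image β).card - 1) * Fintype.card V : ℕ) := by
  rcases isEmpty_or_nonempty V with hV | hV
  · simp [Subsingleton.elim (⟨α, hα⟩ : {c : V → Fin k // Proper G c}) ⟨β, hβ.proper⟩]
  have hcard : (univ.image fun v => (β v : ℕ)).card = (univ.image β).card := by
    change (univ.image (Fin.val ∘ β)).card = _
    rw [← image_image, card_image_of_injective _ Fin.val_injective]
  obtain ⟨m, hm⟩ : ∃ m, (univ.image β).card = m + 1 :=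
    Nat.exists_eq_add_one.mpr (card_pos.mpr (univ_nonempty.image β))
  have hβm : ∀ v, (β v : ℕ) < m + 1 := fun v => hm ▸ hcard ▸ hβ.lt_card_image v
  have hmk : m < k := by
    have := hβ.card_image_le_grundyNum
    omega
  obtain ⟨γ, hγm, hαγ⟩ := exists_agreesBelow_edist_le hβ hk hα m hmk
  obtain ⟨ε, hεm, hγε⟩ := exists_agreesBelow_succ_of_forall_ne hβ.proper γ.2 hγm
    fun v hv => absurd (hβm v) (by omega)
  obtain rfl : ε = ⟨β, hβ.proper⟩ := Subtype.ext (funext fun v => hεm v (hβm v))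
  calc _ ≤ _ := SimpleGraph.edist_triangle
    _ ≤ (2 * m * Fintype.card V + Fintype.card V : ℕ) := by
        push_cast
        exact add_le_add hαγ (hγε.trans (by exact_mod_cast card_le_univ _))
    _ = _ := by
        rw [hm, show 2 * (m + 1) - 1 = 2 * m + 1 by omega]
        push_cast
        ring

end Phase

theorem grundy_distance_general (n k ℓ : ℕ) (G : SimpleGraph (Fin n))
    (hk : grundyNum G + 1 ≤ k)
    (α : Fin n → Fin k) (hα : Proper G α)
    (β : Fin n → Fin k) (hβ : IsGrundy G (fun v => (β v : ℕ)))
    (hβℓ : (Finset.univ.image β).card = ℓ) :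
    (recolorGraph G k).Reachable ⟨α, hα⟩ ⟨β, hβ.proper⟩ ∧
      (recolorGraph G k).dist ⟨α, hα⟩ ⟨β, hβ.proper⟩ ≤ (2 * ℓ - 1) * n := by
  have h := recolorGraph_edist_le_of_isGrundy hk hα hβ
  rw [hβℓ, Fintype.card_fin] at h
  have hreach := reachable_of_edist_ne_top (ne_top_of_le_ne_top (ENat.natCast_ne_top _) h)
  exact ⟨hreach, by exact_mod_cast hreach.coe_dist_eq_edist ▸ h⟩

/-- If `k ≥ χ_g(G) + 1 > ℓ`, then for any proper `k`-coloring `α`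
and any grundy coloring `β` using exactly `ℓ` colors, the distance between `α` and
`β` in the `k`-recoloring graph is at most `(2ℓ − 1)·n`. -/
theorem grundy_distance (n k ℓ : ℕ) (G : SimpleGraph (Fin n))
    (hk : grundyNum G + 1 ≤ k) (hℓ : ℓ < grundyNum G + 1)
    (α : Fin n → Fin k) (hα : Proper G α)
    (β : Fin n → Fin k) (hβ : IsGrundy G (fun v => (β v : ℕ)))
    (hβℓ : (Finset.univ.image β).card = ℓ) :
    (recolorGraph G k).Reachable ⟨α, hα⟩ ⟨β, hβ.proper⟩ ∧
      (recolorGraph G k).dist ⟨α, hα⟩ ⟨β, hβ.proper⟩ ≤ (2 * ℓ - 1) * n :=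
  grundy_distance_general n k ℓ G hk α hα β hβ hβℓ
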